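/- Let τ be a positive-integer-valued random variable with E[τ²] < ∞ arising as the first regeneration time T of a split chain started from ν satisfying the small set condition. Then E_ν[T²] = E_ν[T]·(2 E_π[T] − 1), i.e., E_ν[T²]/E_ν[T] = 2 E_π[T] − 1. -/

import Mathlib

open MeasureTheory ProbabilityTheory ENNReal

noncomputable section

/-- Bernoulli measure on `Bool` with success probability `p`. -/
def bern (p : ℝ≥0∞) : Measure Bool :=
  p • Measure.dirac true + (1 - p) • Measure.dirac false

variable {𝓧 : Type*} [MeasurableSpace 𝓧]

/-- Probability of ringing the bell (regenerating) from state `x`. -/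
def regenProb (β : ℝ≥0∞) (J : Set 𝓧) (x : 𝓧) : ℝ≥0∞ := J.indicator (fun _ => β) x

/-- The normalized residKernel kernel `Q(x,·) = (P(x,·) - β 1_J(x) ν)/(1 - β 1_J(x))`. -/
def residKernel (P : Kernel 𝓧 𝓧) (β : ℝ≥0∞) (J : Set 𝓧) (ν : Measure 𝓧) (x : 𝓧) :
    Measure 𝓧 :=
  (1 - regenProb β J x)⁻¹ • (P x - regenProb β J x • ν)

/-- One step of the split chain on `𝓧 × Bool`: given `(x, b)`, the next state is drawn
from `ν` if `b = true` (regeneration) and from `Q(x,·)` otherwise; then the new bell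
variable is Bernoulli with probability `β 1_J` at the new state. -/
def splitStep (P : Kernel 𝓧 𝓧) (β : ℝ≥0∞) (J : Set 𝓧) (ν : Measure 𝓧)
    (s : 𝓧 × Bool) : Measure (𝓧 × Bool) :=
  (if s.2 then ν else residKernel P β J ν s.1).bind
    (fun y => (Measure.dirac y).prod (bern (regenProb β J y)))

/-- The initial distribution of the split chain when `X₀ ∼ ξ`. -/
def splitInit (β : ℝ≥0∞) (J : Set 𝓧) (ξ : Measure 𝓧) : Measure (𝓧 × Bool) :=
  ξ.bind (fun x => (Measure.dirac x).prod (bern (regenProb β J x)))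

/-- A split chain: a Markov kernel `P` with stationarity data, satisfying the one-step
small set (minorization) condition, together with the trajectory measures of the
associated split chain on `𝓧 × Bool` (Nummelin / Athreya–Ney construction). -/
structure SplitChain (𝓧 : Type*) [MeasurableSpace 𝓧] where
  P : Kernel 𝓧 𝓧
  β : ℝ≥0∞
  J : Set 𝓧
  ν : Measure 𝓧
  K : Kernel (𝓧 × Bool) (𝓧 × Bool)
  traj : Measure (𝓧 × Bool) → Measure (ℕ → 𝓧 × Bool)
  isMarkovP : IsMarkovKernel P
  probν : IsProbabilityMeasure ν
  measJ : MeasurableSet J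
  βpos : 0 < β
  βle : β ≤ 1
  small : ∀ x ∈ J, β • ν ≤ P x
  hK : ∀ s, K s = splitStep P β J ν s
  probTraj : ∀ μ, IsProbabilityMeasure μ → IsProbabilityMeasure (traj μ)
  h0 : ∀ μ, Measure.map (fun ω => ω 0) (traj μ) = μ
  hMarkov : ∀ μ (n : ℕ),
    Measure.map (fun ω => ((fun i : Fin (n + 1) => ω (i : ℕ)), ω (n + 1))) (traj μ)
      = (Measure.map (fun ω => fun i : Fin (n + 1) => ω (i : ℕ)) (traj μ)) ⊗ₘ
        (K.comap (fun v : Fin (n + 1) → 𝓧 × Bool => v (Fin.last n))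
          (measurable_pi_apply _))

namespace SplitChain

variable (sc : SplitChain 𝓧)

/-- The law of the split chain trajectory with initial distribution `X₀ ∼ ξ`. -/
def law (ξ : Measure 𝓧) : Measure (ℕ → 𝓧 × Bool) := sc.traj (splitInit sc.β sc.J ξ)

/-- The `𝓧`-valued coordinate process. -/
def X (n : ℕ) (ω : ℕ → 𝓧 × Bool) : 𝓧 := (ω n).1

/-- The first regeneration time `T := min {n ≥ 1 : Γ_{n-1} = 1}` (with the convention
`sInf ∅ = 0`). -/
def T (ω : ℕ → 𝓧 × Bool) : ℕ := sInf {n | 1 ≤ n ∧ (ω (n - 1)).2 = true}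

/-- The successive regeneration times `T_k`, with `T_0 := 0`. -/
def Tk (sc : SplitChain 𝓧) : ℕ → (ℕ → 𝓧 × Bool) → ℕ
  | 0, _ => 0
  | (k + 1), ω => sInf {n | Tk sc k ω < n ∧ (ω (n - 1)).2 = true}

/-- `R(n) := min {r ≥ 1 : T_r > n}`. -/
def R (n : ℕ) (ω : ℕ → 𝓧 × Bool) : ℕ := sInf {r | 1 ≤ r ∧ n < sc.Tk r ω}

end SplitChain

end


/-! Write `p k = P_ν(T > k)` and `q k = P_π(T > k)`, so that `E T = ∑ₖ P(T > k)` and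
`E T² = ∑ₖ (2k + 1) P(T > k)`. Until the bell rings, `X` moves by the defective kernel
`Q(x, dy) (1 - β 1_J(y))`. Splitting `P = (1 - β 1_J) Q + β 1_J ν` and integrating against the
invariant `π` gives the renewal identity `q n + β π(J) ∑_{j<n} p j = 1`. Letting `n → ∞` gives
Kac's formula `β π(J) E_ν T = 1`, and summing the tails `q n = β π(J) ∑_{k ≥ n} p k` gives
`E_π T = β π(J) ∑ₖ (k + 1) p k`. Hence `E_ν T² = 2 ∑ₖ (k + 1) p k - E_ν T = E_ν T (2 E_π T - 1)`. -/

open Set Filter Topology Finset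

section TailSum

lemma tsum_ite_lt_eq_sum_range (c : ℕ → ℝ≥0∞) (t : ℕ) :
    ∑' k, (if k < t then c k else 0) = ∑ k ∈ range t, c k := by
  rw [sum_eq_tsum_indicator]
  simp [Set.indicator_apply]

variable {Ω : Type*} [MeasurableSpace Ω] {N : Ω → ℕ}

lemma lintegral_sum_range_eq_tsum (hN : Measurable N) (μ : Measure Ω) (c : ℕ → ℝ≥0∞) :
    ∫⁻ ω, ∑ k ∈ range (N ω), c k ∂μ = ∑' k, c k * μ {ω | k < N ω} := by
  have hlt : ∀ k, MeasurableSet {ω | k < N ω} := fun k => measurableSet_lt measurable_const hN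
  simp_rw [← tsum_ite_lt_eq_sum_range]
  rw [lintegral_tsum fun k =>
    (Measurable.ite (hlt k) measurable_const measurable_const).aemeasurable]
  refine tsum_congr fun k => ?_
  rw [← lintegral_indicator_const (hlt k)]
  simp only [Set.indicator_apply, Set.mem_ofPred_eq]

lemma lintegral_natCast_eq_tsum (hN : Measurable N) (μ : Measure Ω) :
    ∫⁻ ω, (N ω : ℝ≥0∞) ∂μ = ∑' k, μ {ω | k < N ω} := by
  simpa using lintegral_sum_range_eq_tsum hN μ (fun _ => 1)

lemma lintegral_natCast_sq_eq_tsum (hN : Measurable N) (μ : Measure Ω) :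
    ∫⁻ ω, (N ω : ℝ≥0∞) ^ 2 ∂μ = ∑' k, (2 * k + 1) * μ {ω | k < N ω} := by
  rw [← lintegral_sum_range_eq_tsum hN]
  congr with ω
  induction N ω with
  | zero => simp
  | succ t ih => rw [sum_range_succ, ← ih]; push_cast; ring

lemma tendsto_measure_lt_atTop_zero (μ : Measure Ω) [IsFiniteMeasure μ] (hN : Measurable N) :
    Tendsto (fun k => μ {ω | k < N ω}) atTop (𝓝 0) := by
  have h := tendsto_measure_iInter_atTop (μ := μ)
    (fun k => (measurableSet_lt measurable_const hN).nullMeasurableSet)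
    (fun j k hjk ω hω => hjk.trans_lt hω) ⟨0, measure_ne_top μ _⟩
  rwa [Set.iInter_eq_empty_iff.2 fun ω => ⟨N ω, lt_irrefl (N ω)⟩, measure_empty] at h

end TailSum

namespace ENNReal

variable {p q : ℕ → ℝ≥0∞} {d : ℝ≥0∞}

lemma mul_tsum_eq_one_of_add_mul_sum_eq_one (h : ∀ n, q n + d * ∑ j ∈ range n, p j = 1)
    (hq : Tendsto q atTop (𝓝 0)) : d * ∑' n, p n = 1 := by
  have hlim : Tendsto (fun n => q n + ∑ j ∈ range n, d * p j) atTop (𝓝 (0 + ∑' n, d * p n)) :=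
    hq.add (ENNReal.tendsto_nat_tsum _)
  simp_rw [← mul_sum, h, zero_add, tendsto_const_nhds_iff] at hlim
  rw [← ENNReal.tsum_mul_left, hlim]

lemma tsum_eq_mul_tsum_add_one_mul_of_add_mul_sum_eq_one
    (h : ∀ n, q n + d * ∑ j ∈ range n, p j = 1) (hq : Tendsto q atTop (𝓝 0)) :
    ∑' n, q n = d * ∑' n, (n + 1) * p n := by
  have htail : ∀ n, q n = d * ∑' k, (if n ≤ k then p k else 0) := by
    intro n
    have hsplit : ∑' k, p k = ∑ j ∈ range n, p j + ∑' k, (if n ≤ k then p k else 0) := by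
      rw [← tsum_ite_lt_eq_sum_range, ← ENNReal.tsum_add]
      refine tsum_congr fun k => ?_
      by_cases hk : k < n
      · simp [hk, not_le.2 hk]
      · simp [hk, not_lt.1 hk]
    have hfin : d * ∑ j ∈ range n, p j ≠ ⊤ := ne_top_of_le_ne_top one_ne_top (h n ▸ le_add_self)
    have hn := h n
    rw [← mul_tsum_eq_one_of_add_mul_sum_eq_one h hq, hsplit, mul_add, add_comm] at hn
    exact (ENNReal.add_right_inj hfin).1 hn
  have hcount : ∀ k, ∑' n, (if n ≤ k then p k else 0) = (k + 1) * p k := by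
    intro k
    simp_rw [← Nat.lt_succ_iff, tsum_ite_lt_eq_sum_range, sum_const, card_range, nsmul_eq_mul]
    push_cast
    rfl
  simp_rw [htail, ENNReal.tsum_mul_left]
  rw [ENNReal.tsum_comm]
  simp_rw [hcount]

lemma tsum_two_mul_add_one_mul_eq_of_add_mul_sum_eq_one
    (h : ∀ n, q n + d * ∑ j ∈ range n, p j = 1) (hq : Tendsto q atTop (𝓝 0)) :
    ∑' n, (2 * n + 1) * p n = (∑' n, p n) * (2 * ∑' n, q n - 1) := by
  have hdS := mul_tsum_eq_one_of_add_mul_sum_eq_one h hq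
  have hS : ∑' n, p n ≠ ⊤ := fun hS => by
    rcases eq_or_ne d 0 with hd | hd <;> simp [hS, hd] at hdS
  have hdouble : ∑' n, (2 * n + 1) * p n + ∑' n, p n = 2 * ∑' n, (n + 1) * p n := by
    rw [← ENNReal.tsum_add, ← ENNReal.tsum_mul_left]
    exact tsum_congr fun n => by ring
  rw [ENNReal.eq_sub_of_add_eq hS hdouble, tsum_eq_mul_tsum_add_one_mul_of_add_mul_sum_eq_one h hq,
    ENNReal.mul_sub fun _ _ => hS, mul_one]
  congr 1
  calc 2 * ∑' n, (n + 1) * p n = 2 * (∑' n, (n + 1) * p n) * (d * ∑' n, p n) := by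
        rw [hdS, mul_one]
    _ = (∑' n, p n) * (2 * (d * ∑' n, (n + 1) * p n)) := by ring

end ENNReal

section Bernoulli

lemma bern_apply (p : ℝ≥0∞) (B : Set Bool) :
    bern p B = p * B.indicator 1 true + (1 - p) * B.indicator 1 false := by
  simp [bern]

lemma bern_false (p : ℝ≥0∞) : bern p {false} = 1 - p := by
  simp [bern_apply]

lemma bern_univ {p : ℝ≥0∞} (hp : p ≤ 1) : bern p univ = 1 := by
  simpa [bern_apply] using add_tsub_cancel_of_le hp

instance (p : ℝ≥0∞) : SFinite (bern p) := by
  unfold bern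
  infer_instance

end Bernoulli

section Splitting

variable {𝓧 : Type*} {β : ℝ≥0∞} {J : Set 𝓧}

lemma regenProb_le (x : 𝓧) : regenProb β J x ≤ β := by
  unfold regenProb
  by_cases hx : x ∈ J <;> simp [hx]

variable [MeasurableSpace 𝓧]

lemma measurable_regenProb (hJ : MeasurableSet J) : Measurable (regenProb β J) :=
  measurable_const.indicator hJ

lemma lintegral_regenProb (hJ : MeasurableSet J) (μ : Measure 𝓧) :
    ∫⁻ x, regenProb β J x ∂μ = β * μ J :=
  lintegral_indicator_const hJ β

lemma measurable_dirac_prod_bern (hJ : MeasurableSet J) :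
    Measurable fun y : 𝓧 => (Measure.dirac y).prod (bern (regenProb β J y)) := by
  refine Measure.measurable_of_measurable_coe _ fun s hs => ?_
  simp_rw [Measure.dirac_prod, Measure.map_apply measurable_prodMk_left hs, bern_apply]
  have hmem : ∀ b : Bool, MeasurableSet {y : 𝓧 | (y, b) ∈ s} := fun b => measurable_prodMk_right hs
  exact ((measurable_regenProb hJ).mul (measurable_const.indicator (hmem true))).add
    ((measurable_const.sub (measurable_regenProb hJ)).mul (measurable_const.indicator (hmem false)))

lemma bind_dirac_prod_bern_apply_prod (hJ : MeasurableSet J) (ρ : Measure 𝓧) {A : Set 𝓧}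
    (hA : MeasurableSet A) (B : Set Bool) :
    ρ.bind (fun y => (Measure.dirac y).prod (bern (regenProb β J y))) (A ×ˢ B)
      = ∫⁻ y in A, bern (regenProb β J y) B ∂ρ := by
  rw [Measure.bind_apply (hA.prod .of_discrete) (measurable_dirac_prod_bern hJ).aemeasurable,
    ← lintegral_indicator hA]
  refine lintegral_congr fun y => ?_
  by_cases hy : y ∈ A <;> simp [Measure.prod_prod, Measure.dirac_apply' _ hA, hy]

lemma isProbabilityMeasure_splitInit (hβ : β ≤ 1) (hJ : MeasurableSet J) (ξ : Measure 𝓧)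
    [IsProbabilityMeasure ξ] : IsProbabilityMeasure (splitInit β J ξ) := by
  constructor
  rw [← univ_prod_univ, splitInit, bind_dirac_prod_bern_apply_prod hJ ξ .univ,
    setLIntegral_congr_fun .univ fun y _ => bern_univ ((regenProb_le y).trans hβ)]
  simp

noncomputable def silentPart (β : ℝ≥0∞) (J : Set 𝓧) (μ : Measure 𝓧) : Measure 𝓧 :=
  μ.withDensity fun x => 1 - regenProb β J x

lemma silentPart_apply (μ : Measure 𝓧) {A : Set 𝓧} (hA : MeasurableSet A) :
    silentPart β J μ A = ∫⁻ x in A, 1 - regenProb β J x ∂μ :=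
  withDensity_apply _ hA

lemma lintegral_silentPart (hJ : MeasurableSet J) (μ : Measure 𝓧) {f : 𝓧 → ℝ≥0∞}
    (hf : Measurable f) :
    ∫⁻ x, f x ∂silentPart β J μ = ∫⁻ x, (1 - regenProb β J x) * f x ∂μ :=
  lintegral_withDensity_eq_lintegral_mul _ (measurable_const.sub (measurable_regenProb hJ)) hf

lemma silentPart_comp_apply (hJ : MeasurableSet J) (κ : Kernel 𝓧 𝓧) (μ : Measure 𝓧)
    {A : Set 𝓧} (hA : MeasurableSet A) :
    silentPart β J (κ ∘ₘ μ) A = ∫⁻ x, silentPart β J (κ x) A ∂μ := by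
  simp_rw [silentPart_apply _ hA, ← lintegral_indicator hA]
  have hm : Measurable fun x => 1 - regenProb β J x :=
    measurable_const.sub (measurable_regenProb hJ)
  exact Measure.lintegral_bind κ.aemeasurable (hm.indicator hA).aemeasurable

lemma silentPart_univ_add (hβ : β ≤ 1) (hJ : MeasurableSet J) (μ : Measure 𝓧) :
    silentPart β J μ univ + β * μ J = μ univ := by
  rw [silentPart_apply μ .univ, Measure.restrict_univ, ← lintegral_regenProb hJ,
    ← lintegral_add_right _ (measurable_regenProb hJ)]
  simp [tsub_add_cancel_of_le ((regenProb_le _).trans hβ)]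

lemma splitInit_apply_prod_false (hJ : MeasurableSet J) (ξ : Measure 𝓧) {A : Set 𝓧}
    (hA : MeasurableSet A) : splitInit β J ξ (A ×ˢ {false}) = silentPart β J ξ A := by
  simp [splitInit, bind_dirac_prod_bern_apply_prod hJ ξ hA, bern_false, silentPart_apply ξ hA]

variable {P : Kernel 𝓧 𝓧} {ν : Measure 𝓧}

lemma regenProb_smul_le (hsmall : ∀ x ∈ J, β • ν ≤ P x) (x : 𝓧) :
    regenProb β J x • ν ≤ P x := by
  by_cases hx : x ∈ J
  · simpa [regenProb, hx] using hsmall x hx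
  · simpa [regenProb, hx] using Measure.zero_le (P x)

lemma residKernel_apply (hβ : β ≠ ⊤) [IsFiniteMeasure ν] (hsmall : ∀ x ∈ J, β • ν ≤ P x)
    (x : 𝓧) {C : Set 𝓧} (hC : MeasurableSet C) :
    residKernel P β J ν x C = (1 - regenProb β J x)⁻¹ * (P x C - regenProb β J x * ν C) := by
  have := ν.smul_finite (ne_top_of_le_ne_top hβ (regenProb_le (J := J) x))
  rw [residKernel, Measure.smul_apply, Measure.sub_apply hC (regenProb_smul_le hsmall x),
    Measure.smul_apply, smul_eq_mul, smul_eq_mul]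

lemma measurable_residKernel (hJ : MeasurableSet J) (hβ : β ≠ ⊤) [IsFiniteMeasure ν]
    (hsmall : ∀ x ∈ J, β • ν ≤ P x) : Measurable (residKernel P β J ν) := by
  refine Measure.measurable_of_measurable_coe _ fun C hC => ?_
  simp_rw [residKernel_apply hβ hsmall _ hC]
  have hr := measurable_regenProb (β := β) hJ
  exact (measurable_const.sub hr).inv.mul ((P.measurable_coe hC).sub (hr.mul_const _))

lemma residKernel_univ_le [IsMarkovKernel P] [IsProbabilityMeasure ν] (hβ : β ≤ 1)
    (hsmall : ∀ x ∈ J, β • ν ≤ P x) (x : 𝓧) : residKernel P β J ν x univ ≤ 1 := by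
  rw [residKernel_apply (ne_top_of_le_ne_top one_ne_top hβ) hsmall x .univ]
  simp

lemma smul_residKernel_add_smul [IsMarkovKernel P] [IsProbabilityMeasure ν] (hβ : β ≤ 1)
    (hsmall : ∀ x ∈ J, β • ν ≤ P x) (x : 𝓧) :
    (1 - regenProb β J x) • residKernel P β J ν x + regenProb β J x • ν = P x := by
  have hle := regenProb_smul_le hsmall x
  have := ν.smul_finite (ne_top_of_le_ne_top one_ne_top ((regenProb_le (J := J) x).trans hβ))
  rcases eq_or_ne (regenProb β J x) 1 with h1 | h1
  · rw [h1, one_smul] at hle ⊢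
    simp [Measure.eq_of_le_of_isProbabilityMeasure hle]
  · have hpos : 1 - regenProb β J x ≠ 0 :=
      (tsub_pos_of_lt (lt_of_le_of_ne ((regenProb_le x).trans hβ) h1)).ne'
    rw [residKernel, smul_smul, ENNReal.mul_inv_cancel hpos (by finiteness), one_smul,
      Measure.sub_add_cancel_of_le hle]

lemma splitStep_false_apply_prod_false (hJ : MeasurableSet J) (x : 𝓧) {A : Set 𝓧}
    (hA : MeasurableSet A) :
    splitStep P β J ν (x, false) (A ×ˢ {false}) = silentPart β J (residKernel P β J ν x) A := by
  simp [splitStep, bind_dirac_prod_bern_apply_prod hJ _ hA, bern_false, silentPart_apply _ hA]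

lemma splitStep_univ_le [IsMarkovKernel P] [IsProbabilityMeasure ν] (hβ : β ≤ 1)
    (hJ : MeasurableSet J) (hsmall : ∀ x ∈ J, β • ν ≤ P x) (s : 𝓧 × Bool) :
    splitStep P β J ν s univ ≤ 1 := by
  rw [← univ_prod_univ, splitStep, bind_dirac_prod_bern_apply_prod hJ _ .univ,
    setLIntegral_congr_fun .univ fun y _ => bern_univ ((regenProb_le y).trans hβ)]
  cases s.2 <;> simp [residKernel_univ_le hβ hsmall]

end Splitting

namespace SplitChain

section Paths

variable {𝓧 : Type*}

def silentBefore (n : ℕ) : Set (ℕ → 𝓧 × Bool) := {ω | ∀ i < n, (ω i).2 = false}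

lemma lt_T_iff {ω : ℕ → 𝓧 × Bool} (hω : ∃ m, (ω m).2 = true) {k : ℕ} :
    k < T ω ↔ ω ∈ silentBefore k := by
  obtain ⟨m, hm⟩ := hω
  have hne : {n | 1 ≤ n ∧ (ω (n - 1)).2 = true}.Nonempty := ⟨m + 1, by simp [hm]⟩
  obtain ⟨hT1, hT⟩ : 1 ≤ T ω ∧ (ω (T ω - 1)).2 = true := Nat.sInf_mem hne
  constructor
  · intro hk i hi
    by_contra hb
    have : T ω ≤ i + 1 := Nat.sInf_le ⟨by omega, by simpa using hb⟩
    omega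
  · intro hsil
    by_contra hk
    simp [hsil (T ω - 1) (by omega)] at hT

lemma setOf_lt_T (k : ℕ) :
    {ω : ℕ → 𝓧 × Bool | k < T ω} = silentBefore k \ {ω | ∀ n, (ω n).2 = false} := by
  ext ω
  by_cases hω : ∀ n, (ω n).2 = false
  · have hT : T ω = 0 := by
      rw [T, Nat.sInf_eq_zero]
      right
      ext n
      simp [hω]
    simp [hT, hω]
  · have hbell : ∃ m, (ω m).2 = true := by simpa using hω
    simp only [Set.mem_sdiff, Set.mem_ofPred_eq, hω, not_false_eq_true, and_true]
    exact lt_T_iff hbell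

lemma preimage_X_zero_inter_silentBefore_one (A : Set 𝓧) :
    X 0 ⁻¹' A ∩ silentBefore 1 = (fun ω => ω 0) ⁻¹' (A ×ˢ {false}) := by
  ext ω
  simp [X, silentBefore]

lemma preimage_prefix_forall_snd_eq_false (n : ℕ) :
    (fun ω (i : Fin (n + 1)) => ω i) ⁻¹' {v | ∀ i, (v i).2 = false}
      = silentBefore (𝓧 := 𝓧) (n + 1) := by
  ext ω
  simp [silentBefore, Fin.forall_iff]

lemma preimage_X_succ_inter_silentBefore (n : ℕ) (A : Set 𝓧) :
    X (n + 1) ⁻¹' A ∩ silentBefore (n + 2)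
      = silentBefore (n + 1) ∩ (fun ω => ω (n + 1)) ⁻¹' (A ×ˢ {false}) := by
  ext ω
  simp only [X, silentBefore, Set.mem_inter_iff, Set.mem_preimage, Set.mem_ofPred_eq,
    Set.mem_prod, Set.mem_singleton_iff]
  grind

end Paths

variable {𝓧 : Type*} [MeasurableSpace 𝓧] (sc : SplitChain 𝓧)

instance : IsProbabilityMeasure sc.ν := sc.probν

instance : IsMarkovKernel sc.P := sc.isMarkovP

instance : IsFiniteKernel sc.K :=
  ⟨⟨1, one_lt_top, fun s => sc.hK s ▸ splitStep_univ_le sc.βle sc.measJ sc.small s⟩⟩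

instance (ξ : Measure 𝓧) [IsProbabilityMeasure ξ] : IsProbabilityMeasure (sc.law ξ) :=
  sc.probTraj _ (isProbabilityMeasure_splitInit sc.βle sc.measJ ξ)

noncomputable def silentStep : Kernel 𝓧 𝓧 where
  toFun x := silentPart sc.β sc.J (residKernel sc.P sc.β sc.J sc.ν x)
  measurable' := by
    refine Measure.measurable_of_measurable_coe _ fun A hA => ?_
    simp_rw [silentPart_apply _ hA, ← lintegral_indicator hA]
    exact (Measure.measurable_lintegral ((measurable_const.sub
      (measurable_regenProb sc.measJ)).indicator hA)).comp
      (measurable_residKernel sc.measJ (ne_top_of_le_ne_top one_ne_top sc.βle) sc.small)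

lemma silentStep_apply (x : 𝓧) :
    sc.silentStep x = silentPart sc.β sc.J (residKernel sc.P sc.β sc.J sc.ν x) := rfl

noncomputable def silentLaw (ξ : Measure 𝓧) : ℕ → Measure 𝓧
  | 0 => silentPart sc.β sc.J ξ
  | n + 1 => sc.silentStep ∘ₘ silentLaw ξ n

lemma silentStep_comp_silentPart_add (π : Measure 𝓧)
    (hinv : π.bind (fun x => sc.P x) = π) :
    sc.silentStep ∘ₘ silentPart sc.β sc.J π + (sc.β * π sc.J) • silentPart sc.β sc.J sc.ν
      = silentPart sc.β sc.J π := by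
  have hr := measurable_regenProb (β := sc.β) sc.measJ
  ext B hB
  have hsplit : ∀ x, (1 - regenProb sc.β sc.J x) * sc.silentStep x B
      + regenProb sc.β sc.J x * silentPart sc.β sc.J sc.ν B = silentPart sc.β sc.J (sc.P x) B := by
    intro x
    rw [← smul_residKernel_add_smul sc.βle sc.small x]
    simp only [silentPart, withDensity_add_measure, withDensity_smul_measure, Measure.add_apply,
      Measure.smul_apply, smul_eq_mul, silentStep_apply]
  rw [Measure.add_apply, Measure.smul_apply, smul_eq_mul,
    Measure.bind_apply hB sc.silentStep.aemeasurable, lintegral_silentPart sc.measJ _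
    (sc.silentStep.measurable_coe hB), ← lintegral_regenProb sc.measJ,
    ← lintegral_mul_const _ hr, ← lintegral_add_right _ (hr.mul_const _)]
  simp_rw [hsplit]
  rw [← silentPart_comp_apply sc.measJ sc.P π hB]
  exact congrArg (silentPart sc.β sc.J · B) hinv

lemma silentLaw_eq_silentLaw_succ_add (π : Measure 𝓧)
    (hinv : π.bind (fun x => sc.P x) = π) (n : ℕ) :
    sc.silentLaw π n = sc.silentLaw π (n + 1) + (sc.β * π sc.J) • sc.silentLaw sc.ν n := by
  induction n with
  | zero => simpa [silentLaw] using (sc.silentStep_comp_silentPart_add π hinv).symm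
  | succ n ih =>
    conv_lhs => rw [silentLaw, ih]
    rw [Measure.comp_add, Measure.comp_smul]
    rfl

lemma traj_preimage_inter_apply (μ : Measure (𝓧 × Bool)) [IsProbabilityMeasure μ] (n : ℕ)
    {S : Set (Fin (n + 1) → 𝓧 × Bool)} (hS : MeasurableSet S) {B : Set (𝓧 × Bool)}
    (hB : MeasurableSet B) :
    sc.traj μ ((fun ω (i : Fin (n + 1)) => ω i) ⁻¹' S ∩ (fun ω => ω (n + 1)) ⁻¹' B)
      = ∫⁻ ω in (fun ω (i : Fin (n + 1)) => ω i) ⁻¹' S, sc.K (ω n) B ∂sc.traj μ := by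
  have := sc.probTraj μ ‹_›
  have hpre : Measurable fun (ω : ℕ → 𝓧 × Bool) (i : Fin (n + 1)) => ω i := by fun_prop
  have hpair : Measurable fun ω : ℕ → 𝓧 × Bool => ((fun i : Fin (n + 1) => ω i), ω (n + 1)) := by
    fun_prop
  calc sc.traj μ ((fun ω (i : Fin (n + 1)) => ω i) ⁻¹' S ∩ (fun ω => ω (n + 1)) ⁻¹' B)
      = (sc.traj μ).map (fun ω => ((fun i : Fin (n + 1) => ω i), ω (n + 1))) (S ×ˢ B) := by
        rw [Measure.map_apply hpair (hS.prod hB)]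
        rfl
    _ = ∫⁻ v in S, sc.K (v (Fin.last n)) B ∂(sc.traj μ).map fun ω (i : Fin (n + 1)) => ω i := by
        rw [sc.hMarkov, Measure.compProd_apply_prod hS hB]
        rfl
    _ = _ := setLIntegral_map hS ((sc.K.measurable_coe hB).comp (measurable_pi_apply _)) hpre

lemma measurableSet_forall_snd_eq_false {ι : Type*} [Countable ι] :
    MeasurableSet {v : ι → 𝓧 × Bool | ∀ i, (v i).2 = false} := by
  simp only [Set.ofPred_forall]
  exact .iInter fun i => measurableSet_eq_fun (by fun_prop) measurable_const

lemma measurableSet_silentBefore (n : ℕ) : MeasurableSet (silentBefore (𝓧 := 𝓧) n) := by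
  simp only [silentBefore, Set.ofPred_forall]
  exact .iInter fun i => .iInter fun _ => measurableSet_eq_fun (by fun_prop) measurable_const

lemma measurable_X (n : ℕ) : Measurable (X (𝓧 := 𝓧) n) :=
  (measurable_pi_apply n).fst

lemma map_restrict_silentBefore (ξ : Measure 𝓧) [IsProbabilityMeasure ξ] (n : ℕ) :
    ((sc.law ξ).restrict (silentBefore (n + 1))).map (X n) = sc.silentLaw ξ n := by
  have := isProbabilityMeasure_splitInit sc.βle sc.measJ ξ
  induction n with
  | zero =>
    ext A hA
    rw [Measure.map_apply (measurable_X 0) hA,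
      Measure.restrict_apply' (measurableSet_silentBefore 1),
      preimage_X_zero_inter_silentBefore_one, ← Measure.map_apply (measurable_pi_apply (X := fun _ : ℕ => 𝓧 × Bool) 0)
        (hA.prod (measurableSet_singleton _)),
      law, sc.h0, splitInit_apply_prod_false sc.measJ ξ hA]
    rfl
  | succ n ih =>
    ext A hA
    have hK : ∀ ω ∈ silentBefore (n + 1), sc.K (ω n) (A ×ˢ {false}) = sc.silentStep (X n ω) A := by
      intro ω hω
      rw [sc.hK, show ω n = (X n ω, false) from Prod.ext rfl (hω n n.lt_succ_self)]
      exact splitStep_false_apply_prod_false sc.measJ _ hA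
    rw [Measure.map_apply (measurable_X _) hA,
      Measure.restrict_apply' (measurableSet_silentBefore _),
      preimage_X_succ_inter_silentBefore, ← preimage_prefix_forall_snd_eq_false, law,
      traj_preimage_inter_apply _ _ _ measurableSet_forall_snd_eq_false
        (hA.prod (measurableSet_singleton _)), preimage_prefix_forall_snd_eq_false,
      setLIntegral_congr_fun (measurableSet_silentBefore _) hK, silentLaw, ← ih,
      Measure.bind_apply hA sc.silentStep.aemeasurable,
      lintegral_map (sc.silentStep.measurable_coe hA) (measurable_X n)]
    rfl

lemma measurable_T : Measurable (T (𝓧 := 𝓧)) := by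
  refine measurable_of_Ioi fun k => ?_
  change MeasurableSet {ω | k < T ω}
  rw [setOf_lt_T]
  exact (measurableSet_silentBefore k).diff measurableSet_forall_snd_eq_false

lemma law_lt_T {ξ : Measure 𝓧} (hξ : sc.law ξ {ω | ∀ n, (ω n).2 = false} = 0) (k : ℕ) :
    sc.law ξ {ω | k < T ω} = sc.law ξ (silentBefore k) := by
  rw [setOf_lt_T, measure_sdiff_null hξ]

lemma law_zero_lt_T {ξ : Measure 𝓧} [IsProbabilityMeasure ξ]
    (hξ : sc.law ξ {ω | ∀ n, (ω n).2 = false} = 0) : sc.law ξ {ω | 0 < T ω} = 1 := by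
  simp [sc.law_lt_T hξ, silentBefore]

lemma law_succ_lt_T {ξ : Measure 𝓧} [IsProbabilityMeasure ξ]
    (hξ : sc.law ξ {ω | ∀ n, (ω n).2 = false} = 0) (k : ℕ) :
    sc.law ξ {ω | k + 1 < T ω} = sc.silentLaw ξ k Set.univ := by
  rw [sc.law_lt_T hξ, ← map_restrict_silentBefore, Measure.map_apply (measurable_X k) .univ,
    Set.preimage_univ, Measure.restrict_apply_univ]

lemma law_lt_T_add_mul_sum (π : Measure 𝓧) [IsProbabilityMeasure π]
    (hinv : π.bind (fun x => sc.P x) = π) (hν : sc.law sc.ν {ω | ∀ n, (ω n).2 = false} = 0)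
    (hπ : sc.law π {ω | ∀ n, (ω n).2 = false} = 0) (n : ℕ) :
    sc.law π {ω | n < T ω} + sc.β * π sc.J * ∑ j ∈ range n, sc.law sc.ν {ω | j < T ω} = 1 := by
  have hstep : ∀ n, sc.law π {ω | n < T ω}
      = sc.law π {ω | n + 1 < T ω} + sc.β * π sc.J * sc.law sc.ν {ω | n < T ω}
    | 0 => by
      rw [sc.law_zero_lt_T hπ, sc.law_succ_lt_T hπ, sc.law_zero_lt_T hν, mul_one, silentLaw,
        silentPart_univ_add sc.βle sc.measJ, measure_univ]
    | m + 1 => by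
      rw [sc.law_succ_lt_T hπ, sc.law_succ_lt_T hπ, sc.law_succ_lt_T hν,
        sc.silentLaw_eq_silentLaw_succ_add π hinv m]
      rfl
  induction n with
  | zero => simp [sc.law_zero_lt_T hπ]
  | succ n ih =>
    rw [← ih, hstep n, sum_range_succ]
    ring

theorem lintegral_T_sq_eq (π : Measure 𝓧) [IsProbabilityMeasure π]
    (hinv : π.bind (fun x => sc.P x) = π) (hν : sc.law sc.ν {ω | ∀ n, (ω n).2 = false} = 0)
    (hπ : sc.law π {ω | ∀ n, (ω n).2 = false} = 0) :
    ∫⁻ ω, (T ω : ℝ≥0∞) ^ 2 ∂sc.law sc.ν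
      = (∫⁻ ω, (T ω : ℝ≥0∞) ∂sc.law sc.ν) * (2 * ∫⁻ ω, (T ω : ℝ≥0∞) ∂sc.law π - 1) := by
  rw [lintegral_natCast_sq_eq_tsum measurable_T, lintegral_natCast_eq_tsum measurable_T,
    lintegral_natCast_eq_tsum measurable_T]
  exact ENNReal.tsum_two_mul_add_one_mul_eq_of_add_mul_sum_eq_one
    (sc.law_lt_T_add_mul_sum π hinv hν hπ) (tendsto_measure_lt_atTop_zero _ measurable_T)

lemma one_le_lintegral_T {ξ : Measure 𝓧} [IsProbabilityMeasure ξ]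
    (hξ : sc.law ξ {ω | ∀ n, (ω n).2 = false} = 0) : 1 ≤ ∫⁻ ω, (T ω : ℝ≥0∞) ∂sc.law ξ := by
  rw [lintegral_natCast_eq_tsum measurable_T, ← sc.law_zero_lt_T hξ]
  exact ENNReal.le_tsum 0

end SplitChain

open SplitChain in
theorem regeneration_time_second_moment {𝓧 : Type*} [MeasurableSpace 𝓧]
    (sc : SplitChain 𝓧) (π : Measure 𝓧) [IsProbabilityMeasure π]
    (hinv : π.bind (fun x => sc.P x) = π)
    (hHarris : ∀ ξ : Measure 𝓧, IsProbabilityMeasure ξ →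
      sc.law ξ {ω | ∀ n : ℕ, (ω n).2 = false} = 0)
    (hT2 : Integrable (fun ω => (T ω : ℝ) ^ 2) (sc.law sc.ν)) :
    ∫ ω, (T ω : ℝ) ^ 2 ∂(sc.law sc.ν)
      = (∫ ω, (T ω : ℝ) ∂(sc.law sc.ν)) * (2 * (∫ ω, (T ω : ℝ) ∂(sc.law π)) - 1) := by
  have hν := hHarris sc.ν inferInstance
  have hπ := hHarris π inferInstance
  have hmoment := sc.lintegral_T_sq_eq π hinv hν hπ
  have hT : Measurable fun ω : ℕ → 𝓧 × Bool => (T ω : ℝ≥0∞) := measurable_from_nat.comp measurable_T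
  have hfin : ∫⁻ ω, (T ω : ℝ≥0∞) ^ 2 ∂sc.law sc.ν ≠ ⊤ := by
    simpa [ENNReal.ofReal_pow] using hT2.lintegral_lt_top.ne
  have hπfin : ∫⁻ ω, (T ω : ℝ≥0∞) ∂sc.law π ≠ ⊤ := by
    intro h
    rw [hmoment, h] at hfin
    simp [(zero_lt_one.trans_le (sc.one_le_lintegral_T hν)).ne'] at hfin
  simp_rw [← ENNReal.toReal_natCast, ← ENNReal.toReal_pow,
    integral_toReal hT.aemeasurable (ae_of_all _ fun _ => by finiteness),
    integral_toReal (hT.pow_const 2).aemeasurable (ae_of_all _ fun _ => by finiteness)]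
  have h1 : 1 ≤ 2 * ∫⁻ ω, (T ω : ℝ≥0∞) ∂sc.law π :=
    (sc.one_le_lintegral_T hπ).trans (le_mul_of_one_le_left' one_le_two)
  rw [hmoment, toReal_mul, toReal_sub_of_le h1 (by finiteness), toReal_mul]
  simp
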